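/- Theorem 2 (sufficiency part): suppose f and g are twice continuously differentiable, x* ∈ FS_g is an equilibrium of ψ at which the Jacobian J(x*) has full row rank, x* is an isolated critical point, and x* is a strict local minimizer of f on the feasible set FS_g (a regular minimal point). Then x* is an asymptotically stable equilibrium of the system x' = ψ(x): for every ε > 0 there exists δ > 0 such that every solution x(·) of x'(t) = ψ(x(t)) with ‖x(0) − x*‖ < δ exists for all t ≥ 0, satisfies ‖x(t) − x*‖ < ε for all t ≥ 0, and converges to x* as t → ∞. -/

import Mathlib

/-!
Along `ψ` the constraint obeys `d/dt g(x) = J ψ = -g(x)`, so `g(x(t)) = e^{-t} g(x(0))` as long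
as `J Jᵀ` stays invertible, while `⟪∇f, ψ⟫ = -⟪((Jᵀ (J Jᵀ)⁻¹)ᵀ ∇f), g⟫ - ‖P ∇f‖²`. On a small
closed ball around `x*` the first term is `O(‖g‖)`, so for `C` large `V = f + C ‖g‖` decreases
along solutions at rate `‖P ∇f‖²`. Enlarging `C`, `V > f(x*)` on the sphere bounding the ball,
because `f > f(x*)` at its feasible points; hence solutions starting close to `x*` never reach
the sphere. Finally, every cluster point `y` of a trapped solution has `g(y) = 0` and, since `V`
is bounded below and cannot keep decreasing at a fixed rate, `P ∇f(y) = 0`; isolation of `x*`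
gives `y = x*`.
-/

open Matrix

/-- The orthogonal projector `P(J) = I - Jᵀ (J Jᵀ)⁻¹ J` built from a Jacobian matrix. -/
noncomputable def projMat {m n : ℕ} (J : Matrix (Fin m) (Fin n) ℝ) :
    Matrix (Fin n) (Fin n) ℝ :=
  1 - Jᵀ * (J * Jᵀ)⁻¹ * J

/-- The vector field `ψ(x) = -Jᵀ (J Jᵀ)⁻¹ g(x) - P(x) ∇f(x)`. -/
noncomputable def psi {m n : ℕ}
    (g : EuclideanSpace ℝ (Fin n) → EuclideanSpace ℝ (Fin m))
    (gradf : EuclideanSpace ℝ (Fin n) → EuclideanSpace ℝ (Fin n))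
    (J : EuclideanSpace ℝ (Fin n) → Matrix (Fin m) (Fin n) ℝ)
    (x : EuclideanSpace ℝ (Fin n)) : EuclideanSpace ℝ (Fin n) :=
  -(Matrix.toEuclideanLin ((J x)ᵀ * (J x * (J x)ᵀ)⁻¹) (g x)) -
    Matrix.toEuclideanLin (projMat (J x)) (gradf x)

open Set Filter Topology Metric
open scoped NNReal RealInnerProductSpace

section LinearAlgebra

variable {m n : ℕ}

theorem inner_toEuclideanLin (A : Matrix (Fin m) (Fin n) ℝ) (u : EuclideanSpace ℝ (Fin m))
    (v : EuclideanSpace ℝ (Fin n)) :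
    ⟪u, Matrix.toEuclideanLin A v⟫ = ⟪Matrix.toEuclideanLin Aᵀ u, v⟫ := by
  rw [← conjTranspose_eq_transpose_of_trivial, toEuclideanLin_conjTranspose_eq_adjoint,
    LinearMap.adjoint_inner_left]

variable {M : Matrix (Fin m) (Fin n) ℝ}

theorem mul_transpose_mul_inv (h : IsUnit (M * Mᵀ)) : M * (Mᵀ * (M * Mᵀ)⁻¹) = 1 := by
  rw [← Matrix.mul_assoc, mul_nonsing_inv _ ((isUnit_iff_isUnit_det _).mp h)]

theorem mul_projMat (h : IsUnit (M * Mᵀ)) : M * projMat M = 0 := by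
  rw [projMat, Matrix.mul_sub, Matrix.mul_one, ← Matrix.mul_assoc, mul_transpose_mul_inv h,
    Matrix.one_mul, sub_self]

theorem transpose_projMat : (projMat M)ᵀ = projMat M := by
  simp [projMat, transpose_mul, transpose_nonsing_inv, Matrix.mul_assoc]

theorem projMat_mul_self (h : IsUnit (M * Mᵀ)) : projMat M * projMat M = projMat M := by
  conv_lhs => arg 1; rw [projMat]
  rw [Matrix.sub_mul, Matrix.one_mul, Matrix.mul_assoc, mul_projMat h, Matrix.mul_zero, sub_zero]

theorem inner_toEuclideanLin_projMat_self (h : IsUnit (M * Mᵀ)) (w : EuclideanSpace ℝ (Fin n)) :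
    ⟪w, toEuclideanLin (projMat M) w⟫ = ‖toEuclideanLin (projMat M) w‖ ^ 2 := by
  rw [← real_inner_self_eq_norm_sq, inner_toEuclideanLin _ (toEuclideanLin _ w), transpose_projMat,
    ← LinearMap.comp_apply, ← toLpLin_mul_same, projMat_mul_self h, real_inner_comm]

end LinearAlgebra

section Continuity

theorem ContinuousAt.matrix_mul {X R l m n : Type*} [TopologicalSpace X] [TopologicalSpace R]
    [Fintype m] [Mul R] [AddCommMonoid R] [ContinuousAdd R] [ContinuousMul R]
    {A : X → Matrix l m R} {B : X → Matrix m n R} {x : X} (hA : ContinuousAt A x)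
    (hB : ContinuousAt B x) : ContinuousAt (fun y => A y * B y) x :=
  (continuous_fst.matrix_mul continuous_snd).continuousAt.comp (f := fun y => (A y, B y))
    (hA.prodMk hB)

variable {m n : ℕ}

theorem continuousAt_transpose_mul_inv {M : Matrix (Fin m) (Fin n) ℝ} (h : IsUnit (M * Mᵀ)) :
    ContinuousAt (fun N : Matrix (Fin m) (Fin n) ℝ => Nᵀ * (N * Nᵀ)⁻¹) M := by
  have hdet : (M * Mᵀ).det ≠ 0 := ((isUnit_iff_isUnit_det _).mp h).ne_zero
  have hinv : ContinuousAt Inv.inv (M * Mᵀ) := continuousAt_matrix_inv _ (by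
    rw [Ring.inverse_eq_inv']; exact continuousAt_inv₀ hdet)
  exact continuous_id.matrix_transpose.continuousAt.matrix_mul (hinv.comp (f := fun N => N * Nᵀ)
    (continuous_id.matrix_mul continuous_id.matrix_transpose).continuousAt)

theorem continuousAt_projMat {M : Matrix (Fin m) (Fin n) ℝ} (h : IsUnit (M * Mᵀ)) :
    ContinuousAt projMat M :=
  continuousAt_const.sub ((continuousAt_transpose_mul_inv h).matrix_mul continuousAt_id)

theorem Continuous.eventually_isUnit_mul_transpose {X : Type*} [TopologicalSpace X]
    {J : X → Matrix (Fin m) (Fin n) ℝ} (hJ : Continuous J) {x : X} (hx : IsUnit (J x * (J x)ᵀ)) :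
    ∀ᶠ y in 𝓝 x, IsUnit (J y * (J y)ᵀ) := by
  simp only [isUnit_iff_isUnit_det, isUnit_iff_ne_zero] at hx ⊢
  exact (hJ.matrix_mul hJ.matrix_transpose).matrix_det.continuousAt.eventually_ne hx

theorem ContinuousAt.toEuclideanLin_apply {X : Type*} [TopologicalSpace X] {k : ℕ}
    {A : X → Matrix (Fin k) (Fin n) ℝ} {v : X → EuclideanSpace ℝ (Fin n)} {x : X}
    (hA : ContinuousAt A x) (hv : ContinuousAt v x) :
    ContinuousAt (fun y => toEuclideanLin (A y) (v y)) x := by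
  have : Continuous fun p : Matrix (Fin k) (Fin n) ℝ × EuclideanSpace ℝ (Fin n) =>
      WithLp.toLp 2 (p.1 *ᵥ WithLp.ofLp p.2) :=
    (PiLp.continuous_toLp 2 _).comp
      (continuous_fst.matrix_mulVec ((PiLp.continuous_ofLp 2 _).comp continuous_snd))
  exact this.continuousAt.comp (f := fun y => (A y, v y)) (hA.prodMk hv)

theorem continuous_of_hasFDerivAt_toEuclideanLin
    {g : EuclideanSpace ℝ (Fin n) → EuclideanSpace ℝ (Fin m)}
    {J : EuclideanSpace ℝ (Fin n) → Matrix (Fin m) (Fin n) ℝ} (hg : ContDiff ℝ 1 g)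
    (hJ : ∀ y, HasFDerivAt g (LinearMap.toContinuousLinearMap (toEuclideanLin (J y))) y) :
    Continuous J := by
  have hJ_eq : J = fun y => toEuclideanLin.symm (fderiv ℝ g y : _ →ₗ[ℝ] _) := by
    ext1 y
    simp [(hJ y).fderiv]
  rw [hJ_eq]
  exact ((toEuclideanLin.symm.toLinearMap.comp
    (ContinuousLinearMap.coeLM ℝ)).continuous_of_finiteDimensional).comp
      (hg.continuous_fderiv one_ne_zero)

theorem continuous_of_hasGradientAt {f : EuclideanSpace ℝ (Fin n) → ℝ}
    {gradf : EuclideanSpace ℝ (Fin n) → EuclideanSpace ℝ (Fin n)} (hf : ContDiff ℝ 1 f)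
    (hgrad : ∀ y, HasGradientAt f (gradf y) y) : Continuous gradf := by
  have hgrad_eq : gradf = fun y => (InnerProductSpace.toDual ℝ _).symm (fderiv ℝ f y) := by
    ext1 y
    simp [(hgrad y).hasFDerivAt.fderiv]
  rw [hgrad_eq]
  exact (InnerProductSpace.toDual ℝ _).symm.continuous.comp (hf.continuous_fderiv one_ne_zero)

end Continuity

section Analysis

theorem sub_le_mul_sub_of_hasDerivAt_le {W w : ℝ → ℝ} {a b c : ℝ} (hab : a ≤ b)
    (hW : ∀ t ∈ Icc a b, HasDerivAt W (w t) t) (hw : ∀ t ∈ Icc a b, w t ≤ c) :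
    W b - W a ≤ c * (b - a) :=
  (convex_Icc a b).image_sub_le_mul_sub_of_deriv_le
    (fun t ht => (hW t ht).continuousAt.continuousWithinAt)
    (fun t ht => (hW t (interior_subset ht)).differentiableAt.differentiableWithinAt)
    (fun t ht => (hW t (interior_subset ht)).deriv ▸ hw t (interior_subset ht))
    a (left_mem_Icc.2 hab) b (right_mem_Icc.2 hab) hab

theorem exists_lipschitzOnWith_of_hasDerivAt {E : Type*} [NormedAddCommGroup E]
    [NormedSpace ℝ E] {F : E → E} {K : Set E} (hK : IsCompact K) (hF : ContinuousOn F K)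
    {x : ℝ → E} {s : Set ℝ} (hs : Convex ℝ s) (hx : ∀ t ∈ s, HasDerivAt x (F (x t)) t)
    (hxK : ∀ t ∈ s, x t ∈ K) : ∃ L, LipschitzOnWith L x s := by
  obtain ⟨C, hC⟩ := hK.exists_bound_of_continuousOn hF
  refine ⟨C.toNNReal, hs.lipschitzOnWith_of_nnnorm_hasDerivWithin_le
    (fun t ht => (hx t ht).hasDerivWithinAt) fun t ht => ?_⟩
  rw [← NNReal.coe_le_coe, coe_nnnorm]
  exact (hC _ (hxK t ht)).trans (Real.le_coe_toNNReal C)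

theorem IsCompact.eventually_forall_pos_add_mul {X : Type*} [TopologicalSpace X] {S : Set X}
    (hS : IsCompact S) {φ γ : X → ℝ} (hφ : Continuous φ) (hγ : Continuous γ)
    (hγ0 : ∀ y ∈ S, 0 ≤ γ y) (hpos : ∀ y ∈ S, γ y = 0 → 0 < φ y) :
    ∀ᶠ C in atTop, ∀ y ∈ S, 0 < φ y + C * γ y := by
  obtain ⟨β, hβ, hβZ⟩ := (hS.inter_right (isClosed_le hφ continuous_const)).exists_forall_le'
    hγ.continuousOn fun y hy => (hγ0 y hy.1).lt_of_ne' fun h => (hpos y hy.1 h).not_ge hy.2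
  obtain ⟨M, hM⟩ := hS.exists_bound_of_continuousOn hφ.continuousOn
  filter_upwards [eventually_ge_atTop 0, eventually_gt_atTop (M / β)] with C hC0 hCM y hy
  by_cases hφy : φ y ≤ 0
  · have hγy : β ≤ γ y := hβZ y ⟨hy, hφy⟩
    have hMβ : M < C * β := (div_lt_iff₀ hβ).1 hCM
    have hφM : -M ≤ φ y := (abs_le.1 (hM y hy)).1
    nlinarith
  · nlinarith [hγ0 y hy]

theorem forall_mem_ball_of_lt_on_sphere {E : Type*} [PseudoMetricSpace E] {x : ℝ → E} {c : E}
    {ρ : ℝ} {V : E → ℝ} (hx : ContinuousOn x (Ici 0)) (h0 : x 0 ∈ ball c ρ)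
    (hsphere : ∀ y ∈ sphere c ρ, V (x 0) < V y)
    (hV : ∀ T, 0 ≤ T → (∀ s ∈ Icc 0 T, x s ∈ closedBall c ρ) → V (x T) ≤ V (x 0)) :
    ∀ t, 0 ≤ t → x t ∈ ball c ρ := by
  by_contra! hexit
  have hdist : ContinuousOn (fun t => dist (x t) c) (Ici 0) :=
    (continuous_id.dist continuous_const).comp_continuousOn hx
  set B := Ici 0 ∩ (fun t => dist (x t) c) ⁻¹' Ici ρ
  have hB : IsClosed B := hdist.preimage_isClosed_of_isClosed isClosed_Ici isClosed_Ici
  obtain ⟨t₁, ht₁, hout⟩ := hexit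
  have ht₀ : sInf B ∈ B :=
    hB.csInf_mem ⟨t₁, ht₁, not_lt.1 (mem_ball.not.1 hout)⟩ ⟨0, fun t ht => ht.1⟩
  set t₀ := sInf B
  have hbefore : ∀ s ∈ Ico 0 t₀, dist (x s) c ≤ ρ := fun s hs =>
    (not_le.1 fun h => hs.2.not_ge (csInf_le ⟨0, fun t ht => ht.1⟩ ⟨hs.1, h⟩)).le
  have ht₀0 : (0 : ℝ) ≠ t₀ := fun h => (mem_ball.1 h0).not_ge (h ▸ ht₀.2)
  have hend : dist (x t₀) c ≤ ρ :=
    ContinuousWithinAt.closure_le (by rw [closure_Ico ht₀0]; exact ⟨ht₀.1, le_rfl⟩)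
      ((hdist t₀ ht₀.1).mono Ico_subset_Ici_self) continuousWithinAt_const hbefore
  have hclosed : ∀ s ∈ Icc 0 t₀, x s ∈ closedBall c ρ := fun s hs =>
    hs.2.lt_or_eq.elim (fun hlt => hbefore s ⟨hs.1, hlt⟩) fun heq => heq ▸ hend
  have hsph : x t₀ ∈ sphere c ρ := le_antisymm hend ht₀.2
  exact (hsphere _ hsph).not_ge (hV t₀ ht₀.1 hclosed)

theorem exists_pos_forall_mem_ball_of_lt_on_sphere {E : Type*} [PseudoMetricSpace E] {c : E}
    {ρ : ℝ} (hρ : 0 < ρ) (hS : IsCompact (sphere c ρ)) {V : E → ℝ} (hV : Continuous V)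
    (hsphere : ∀ y ∈ sphere c ρ, V c < V y) :
    ∃ δ > 0, ∀ x : ℝ → E, ContinuousOn x (Ici 0) → dist (x 0) c < δ →
      (∀ T, 0 ≤ T → (∀ s ∈ Icc 0 T, x s ∈ closedBall c ρ) → V (x T) ≤ V (x 0)) →
      ∀ t, 0 ≤ t → x t ∈ ball c ρ := by
  obtain ⟨α, hcα, hαS⟩ := hS.exists_forall_le' hV.continuousOn hsphere
  obtain ⟨δ, hδ, hVδ⟩ := Metric.eventually_nhds_iff.1 (hV.continuousAt.eventually (gt_mem_nhds hcα))
  refine ⟨min δ ρ, lt_min hδ hρ, fun x hx hx0 hV => forall_mem_ball_of_lt_on_sphere hx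
    (hx0.trans_le (min_le_right _ _)) (fun y hy => ?_) hV⟩
  exact (hVδ (hx0.trans_le (min_le_left _ _))).trans_le (hαS y hy)

theorem MapClusterPt.le_zero_of_sub_le_neg_mul {E : Type*} [PseudoMetricSpace E]
    {x : ℝ → E} {L : ℝ≥0} (hx : LipschitzOnWith L x (Ici 0)) {D : E → ℝ} (hD : ∀ z, 0 ≤ D z)
    {W : ℝ → ℝ} (hdrop : ∀ ⦃p q c⦄, 0 ≤ p → p ≤ q → (∀ s ∈ Icc p q, c ≤ D (x s)) →
      W q - W p ≤ -c * (q - p))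
    (hbdd : BddBelow (W '' Ici 0)) {y : E} (hy : MapClusterPt y atTop x)
    (hDy : ContinuousAt D y) : D y ≤ 0 := by
  by_contra! hpos
  obtain ⟨η, hη, hDnear⟩ : ∃ η > 0, ∀ {z}, dist z y < η → D y / 2 < D z :=
    Metric.eventually_nhds_iff.1 (hDy.eventually (lt_mem_nhds (half_lt_self hpos)))
  set τ := η / (2 * (L + 1))
  have hτ : 0 < τ := by positivity
  have hLτ : L * τ ≤ η / 2 := by
    rw [mul_div_assoc', div_le_div_iff₀ (by positivity) two_pos]
    nlinarith [L.coe_nonneg]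
  -- `W` decreases to its infimum `ℓ`, so eventually it drops by less than `(D y / 2) τ` on
  -- any interval of length `τ`; but starting near `y` it drops by more.
  set ℓ := sInf (W '' Ici 0)
  obtain ⟨_, ⟨t₀, ht₀, rfl⟩, hWt₀⟩ := exists_lt_of_csInf_lt (nonempty_Ici.image W)
    (lt_add_of_pos_right ℓ (mul_pos (half_pos hpos) hτ))
  obtain ⟨t, hnear, ht⟩ := ((hy.frequently (ball_mem_nhds y (half_pos hη))).and_eventually
    (eventually_ge_atTop t₀)).exists
  have ht0 : 0 ≤ t := (mem_Ici.1 ht₀).trans ht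
  have hfall : W (t + τ) - W t ≤ -(D y / 2) * (t + τ - t) := by
    refine hdrop ht0 (by linarith) fun s hs => (hDnear ?_).le
    calc dist (x s) y ≤ dist (x s) (x t) + dist (x t) y := dist_triangle _ _ _
      _ < L * τ + η / 2 := by
        refine add_lt_add_of_le_of_lt ?_ (mem_ball.1 hnear)
        refine (hx.dist_le_mul s (ht0.trans hs.1) t ht0).trans (mul_le_mul_of_nonneg_left ?_ L.2)
        rw [Real.dist_eq, abs_of_nonneg (by linarith [hs.1])]
        linarith [hs.2]
      _ ≤ η := by linarith
  have hmono : W t - W t₀ ≤ -0 * (t - t₀) := hdrop ht₀ ht fun s _ => hD _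
  have hinf : ℓ ≤ W (t + τ) := csInf_le hbdd ⟨_, mem_Ici.2 (by linarith), rfl⟩
  nlinarith

end Analysis

section VectorField

variable {m n : ℕ} {g : EuclideanSpace ℝ (Fin n) → EuclideanSpace ℝ (Fin m)}
  {gradf : EuclideanSpace ℝ (Fin n) → EuclideanSpace ℝ (Fin n)}
  {J : EuclideanSpace ℝ (Fin n) → Matrix (Fin m) (Fin n) ℝ} {y : EuclideanSpace ℝ (Fin n)}

noncomputable def projGrad (gradf : EuclideanSpace ℝ (Fin n) → EuclideanSpace ℝ (Fin n))
    (J : EuclideanSpace ℝ (Fin n) → Matrix (Fin m) (Fin n) ℝ) (y : EuclideanSpace ℝ (Fin n)) :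
    EuclideanSpace ℝ (Fin n) :=
  toEuclideanLin (projMat (J y)) (gradf y)

theorem toEuclideanLin_psi (hy : IsUnit (J y * (J y)ᵀ)) :
    toEuclideanLin (J y) (psi g gradf J y) = -g y := by
  simp only [psi, map_sub, map_neg, ← LinearMap.comp_apply, ← toLpLin_mul_same,
    mul_transpose_mul_inv hy, mul_projMat hy, toLpLin_one, map_zero, LinearMap.zero_apply,
    LinearMap.id_apply, sub_zero]

theorem inner_gradf_psi (hy : IsUnit (J y * (J y)ᵀ)) :
    ⟪gradf y, psi g gradf J y⟫ =
      -⟪toEuclideanLin ((J y)ᵀ * (J y * (J y)ᵀ)⁻¹)ᵀ (gradf y), g y⟫ - ‖projGrad gradf J y‖ ^ 2 := by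
  rw [psi, inner_sub_right, inner_neg_right, inner_toEuclideanLin,
    inner_toEuclideanLin_projMat_self hy, projGrad]

theorem continuousAt_psi (hgc : Continuous g) (hgradc : Continuous gradf) (hJc : Continuous J)
    (hy : IsUnit (J y * (J y)ᵀ)) : ContinuousAt (psi g gradf J) y :=
  (((continuousAt_transpose_mul_inv hy).comp hJc.continuousAt).toEuclideanLin_apply
    hgc.continuousAt).neg.sub
      (((continuousAt_projMat hy).comp hJc.continuousAt).toEuclideanLin_apply hgradc.continuousAt)

theorem continuousAt_projGrad (hgradc : Continuous gradf) (hJc : Continuous J)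
    (hy : IsUnit (J y * (J y)ᵀ)) : ContinuousAt (projGrad gradf J) y :=
  ((continuousAt_projMat hy).comp hJc.continuousAt).toEuclideanLin_apply hgradc.continuousAt

theorem eventually_inner_gradf_psi_le {K : Set (EuclideanSpace ℝ (Fin n))} (hK : IsCompact K)
    (hgradc : Continuous gradf) (hJc : Continuous J) (hreg : ∀ y ∈ K, IsUnit (J y * (J y)ᵀ)) :
    ∀ᶠ C in atTop, ∀ y ∈ K,
      ⟪gradf y, psi g gradf J y⟫ ≤ C * ‖g y‖ - ‖projGrad gradf J y‖ ^ 2 := by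
  obtain ⟨c, hc⟩ := hK.exists_bound_of_continuousOn (f := fun y =>
    toEuclideanLin ((J y)ᵀ * (J y * (J y)ᵀ)⁻¹)ᵀ (gradf y)) fun y hy =>
      (((continuous_id.matrix_transpose.continuousAt.comp
        (continuousAt_transpose_mul_inv (hreg y hy))).comp hJc.continuousAt).toEuclideanLin_apply
          hgradc.continuousAt).continuousWithinAt
  filter_upwards [eventually_ge_atTop c] with C hC y hy
  have hcoef := (neg_le_abs _).trans (abs_real_inner_le_norm
    (toEuclideanLin ((J y)ᵀ * (J y * (J y)ᵀ)⁻¹)ᵀ (gradf y)) (g y))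
  rw [inner_gradf_psi (hreg y hy)]
  nlinarith [hc y hy, norm_nonneg (g y)]

theorem exists_lyapunov_const {f : EuclideanSpace ℝ (Fin n) → ℝ} (hfc : Continuous f)
    (hgc : Continuous g) (hgradc : Continuous gradf) (hJc : Continuous J)
    {K S : Set (EuclideanSpace ℝ (Fin n))} (hK : IsCompact K) (hS : IsCompact S)
    (hreg : ∀ y ∈ K, IsUnit (J y * (J y)ᵀ)) {xs : EuclideanSpace ℝ (Fin n)}
    (hmin : ∀ y ∈ S, g y = 0 → f xs < f y) :
    ∃ C, (∀ y ∈ K, ⟪gradf y, psi g gradf J y⟫ ≤ C * ‖g y‖ - ‖projGrad gradf J y‖ ^ 2) ∧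
      ∀ y ∈ S, f xs < f y + C * ‖g y‖ :=
  ((eventually_inner_gradf_psi_le hK hgradc hJc hreg).and
    (hS.eventually_forall_pos_add_mul (φ := fun y => f y - f xs)
      (hfc.sub continuous_const) hgc.norm (fun _ _ => norm_nonneg _)
      fun y hy hgy => sub_pos.2 (hmin y hy (norm_eq_zero.1 hgy)))).exists.imp
    fun _ hC => ⟨hC.1, fun y hy => by linarith [hC.2 y hy]⟩

end VectorField

section Trajectory

variable {m n : ℕ} {f : EuclideanSpace ℝ (Fin n) → ℝ}
  {g : EuclideanSpace ℝ (Fin n) → EuclideanSpace ℝ (Fin m)}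
  {gradf : EuclideanSpace ℝ (Fin n) → EuclideanSpace ℝ (Fin n)}
  {J : EuclideanSpace ℝ (Fin n) → Matrix (Fin m) (Fin n) ℝ} {x : ℝ → EuclideanSpace ℝ (Fin n)}

theorem constraint_comp_eq_exp_smul
    (hJ : ∀ y, HasFDerivAt g (LinearMap.toContinuousLinearMap (toEuclideanLin (J y))) y) {T : ℝ}
    (hx : ∀ t ∈ Icc 0 T, HasDerivAt x (psi g gradf J (x t)) t)
    (hreg : ∀ t ∈ Icc 0 T, IsUnit (J (x t) * (J (x t))ᵀ)) :
    ∀ t ∈ Icc 0 T, g (x t) = Real.exp (-t) • g (x 0) := by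
  have hderiv : ∀ t ∈ Icc 0 T, HasDerivAt (fun s => Real.exp s • g (x s)) 0 t := fun t ht =>
    ((Real.hasDerivAt_exp t).smul ((hJ (x t)).comp_hasDerivAt t (hx t ht))).congr_deriv (by
      simp [toEuclideanLin_psi (hreg t ht)])
  intro t ht
  have hconst := constant_of_has_deriv_right_zero
    (fun s hs => (hderiv s hs).continuousAt.continuousWithinAt)
    (fun s hs => (hderiv s (Ico_subset_Icc_self hs)).hasDerivWithinAt) t ht
  simp only [Real.exp_zero, one_smul] at hconst
  rw [← hconst, smul_smul, ← Real.exp_add, neg_add_cancel, Real.exp_zero, one_smul]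

theorem lyapunov_sub_le (hgrad : ∀ y, HasGradientAt f (gradf y) y)
    (hJ : ∀ y, HasFDerivAt g (LinearMap.toContinuousLinearMap (toEuclideanLin (J y))) y)
    {K : Set (EuclideanSpace ℝ (Fin n))} (hreg : ∀ y ∈ K, IsUnit (J y * (J y)ᵀ)) {C : ℝ}
    (hkey : ∀ y ∈ K, ⟪gradf y, psi g gradf J y⟫ ≤ C * ‖g y‖ - ‖projGrad gradf J y‖ ^ 2)
    (hx : ∀ t, 0 ≤ t → HasDerivAt x (psi g gradf J (x t)) t) {p q c : ℝ} (hp : 0 ≤ p)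
    (hpq : p ≤ q) (hxK : ∀ t ∈ Icc 0 q, x t ∈ K)
    (hc : ∀ t ∈ Icc p q, c ≤ ‖projGrad gradf J (x t)‖ ^ 2) :
    f (x q) + C * ‖g (x q)‖ - (f (x p) + C * ‖g (x p)‖) ≤ -c * (q - p) := by
  have hexp : ∀ t ∈ Icc 0 q, ‖g (x t)‖ = Real.exp (-t) * ‖g (x 0)‖ := fun t ht => by
    rw [constraint_comp_eq_exp_smul hJ (fun s hs => hx s hs.1) (fun s hs => hreg _ (hxK s hs)) t ht,
      norm_smul, Real.norm_of_nonneg (Real.exp_pos _).le]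
  have hsub : f (x q) + C * (Real.exp (-q) * ‖g (x 0)‖) -
      (f (x p) + C * (Real.exp (-p) * ‖g (x 0)‖)) ≤ -c * (q - p) := sub_le_mul_sub_of_hasDerivAt_le
    (W := fun t => f (x t) + C * (Real.exp (-t) * ‖g (x 0)‖))
    (w := fun t => ⟪gradf (x t), psi g gradf J (x t)⟫ - C * (Real.exp (-t) * ‖g (x 0)‖)) hpq
    (fun t ht => ((hgrad (x t)).hasFDerivAt.comp_hasDerivAt t (hx t (hp.trans ht.1))).add
      ((((Real.hasDerivAt_exp _).comp t (hasDerivAt_neg t)).mul_const _).const_mul C) |>.congr_deriv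
        (by simp [sub_eq_add_neg]))
    (fun t ht => by
      have hkt := hkey _ (hxK t ⟨hp.trans ht.1, ht.2⟩)
      rw [hexp t ⟨hp.trans ht.1, ht.2⟩] at hkt
      linarith [hc t ht])
  rwa [hexp p ⟨hp, hpq⟩, hexp q ⟨hp.trans hpq, le_rfl⟩]

theorem tendsto_of_forall_mem_isCompact (hgrad : ∀ y, HasGradientAt f (gradf y) y)
    (hJ : ∀ y, HasFDerivAt g (LinearMap.toContinuousLinearMap (toEuclideanLin (J y))) y)
    (hgradc : Continuous gradf) (hJc : Continuous J) {K : Set (EuclideanSpace ℝ (Fin n))}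
    (hK : IsCompact K) (hreg : ∀ y ∈ K, IsUnit (J y * (J y)ᵀ)) {C : ℝ}
    (hkey : ∀ y ∈ K, ⟪gradf y, psi g gradf J y⟫ ≤ C * ‖g y‖ - ‖projGrad gradf J y‖ ^ 2)
    {xs : EuclideanSpace ℝ (Fin n)} (hcrit : ∀ y ∈ K, g y = 0 → projGrad gradf J y = 0 → y = xs)
    (hx : ∀ t, 0 ≤ t → HasDerivAt x (psi g gradf J (x t)) t) (hxK : ∀ t, 0 ≤ t → x t ∈ K) :
    Tendsto x atTop (𝓝 xs) := by
  have hfc : Continuous f :=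
    continuous_iff_continuousAt.2 fun y => (hgrad y).hasFDerivAt.continuousAt
  have hgc : Continuous g := continuous_iff_continuousAt.2 fun y => (hJ y).continuousAt
  obtain ⟨L, hL⟩ := exists_lipschitzOnWith_of_hasDerivAt hK
    (fun y hy => (continuousAt_psi hgc hgradc hJc (hreg y hy)).continuousWithinAt)
    (convex_Ici 0) hx hxK
  obtain ⟨M, hM⟩ := hK.exists_bound_of_continuousOn (f := fun y => f y + C * ‖g y‖)
    (hfc.add (continuous_const.mul hgc.norm)).continuousOn
  have hg0 : Tendsto (g ∘ x) atTop (𝓝 0) := by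
    have hexp := Real.tendsto_exp_neg_atTop_nhds_zero.smul_const (g (x 0))
    rw [zero_smul] at hexp
    refine hexp.congr' (eventually_atTop.2 ⟨0, fun t ht => ?_⟩)
    exact (constraint_comp_eq_exp_smul hJ (fun s hs => hx s hs.1)
      (fun s hs => hreg _ (hxK s hs.1)) t ⟨ht, le_rfl⟩).symm
  refine hK.tendsto_nhds_of_unique_mapClusterPt (eventually_atTop.2 ⟨0, hxK⟩)
    fun y hyK hy => hcrit y hyK ?_ ?_
  · by_contra hne
    exact clusterPt_iff_not_disjoint.1
      ((hy.continuousAt_comp hgc.continuousAt).clusterPt.mono hg0) (disjoint_nhds_nhds.2 hne)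
  · have hP := hy.le_zero_of_sub_le_neg_mul hL (D := fun z => ‖projGrad gradf J z‖ ^ 2)
      (fun _ => sq_nonneg _) (W := fun t => f (x t) + C * ‖g (x t)‖)
      (fun p q c hp hpq hc => lyapunov_sub_le hgrad hJ hreg hkey hx hp hpq
        (fun t ht => hxK t ht.1) hc)
      ⟨-M, by rintro _ ⟨t, ht, rfl⟩; exact neg_le_of_abs_le (hM _ (hxK t ht))⟩
      ((continuousAt_projGrad hgradc hJc (hreg y hyK)).norm.pow 2)
    exact norm_eq_zero.1 (pow_eq_zero_iff two_ne_zero |>.1 (le_antisymm hP (sq_nonneg _)))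

end Trajectory

theorem strict_local_min_asymptotically_stable_general (m n : ℕ)
    (f : EuclideanSpace ℝ (Fin n) → ℝ)
    (g : EuclideanSpace ℝ (Fin n) → EuclideanSpace ℝ (Fin m))
    (gradf : EuclideanSpace ℝ (Fin n) → EuclideanSpace ℝ (Fin n))
    (J : EuclideanSpace ℝ (Fin n) → Matrix (Fin m) (Fin n) ℝ)
    (hf : ContDiff ℝ 2 f) (hg : ContDiff ℝ 2 g)
    (hgrad : ∀ y, HasGradientAt f (gradf y) y)
    (hJ : ∀ y, HasFDerivAt g
      (LinearMap.toContinuousLinearMap (Matrix.toEuclideanLin (J y))) y)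
    (xs : EuclideanSpace ℝ (Fin n))
    (hfeas : g xs = 0)
    (hrank : IsUnit (J xs * (J xs)ᵀ))
    (hisolated : ∃ r > (0 : ℝ), ∀ y : EuclideanSpace ℝ (Fin n), ‖y - xs‖ < r → y ≠ xs →
      ¬(g y = 0 ∧ Matrix.toEuclideanLin (projMat (J y)) (gradf y) = 0))
    (hstrictmin : ∃ r > (0 : ℝ), ∀ y : EuclideanSpace ℝ (Fin n), ‖y - xs‖ < r →
      g y = 0 → y ≠ xs → f xs < f y) :
    ∀ ε > (0 : ℝ), ∃ δ > (0 : ℝ), ∀ x : ℝ → EuclideanSpace ℝ (Fin n),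
      (∀ t : ℝ, 0 ≤ t → HasDerivAt x (psi g gradf J (x t)) t) →
      ‖x 0 - xs‖ < δ →
      (∀ t : ℝ, 0 ≤ t → ‖x t - xs‖ < ε) ∧
      Filter.Tendsto x Filter.atTop (nhds xs) := by
  obtain ⟨r₁, hr₁, hiso⟩ := hisolated
  obtain ⟨r₂, hr₂, hmin⟩ := hstrictmin
  intro ε hε
  have hJc := continuous_of_hasFDerivAt_toEuclideanLin (hg.of_le one_le_two) hJ
  have hgradc := continuous_of_hasGradientAt (hf.of_le one_le_two) hgrad
  obtain ⟨ρ, ⟨hρε, hρr₁, hρr₂, hρreg⟩, hρ⟩ := (((eventually_lt_nhds hε).and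
    ((eventually_lt_nhds hr₁).and ((eventually_lt_nhds hr₂).and (eventually_closedBall_subset
      (hJc.eventually_isUnit_mul_transpose hrank))))).filter_mono nhdsWithin_le_nhds |>.and
        (self_mem_nhdsWithin (s := Ioi 0))).exists
  obtain ⟨C, hkey, hsphere⟩ := exists_lyapunov_const hf.continuous hg.continuous hgradc hJc
    (isCompact_closedBall xs ρ) (isCompact_sphere xs ρ) hρreg fun y hy hgy =>
      hmin y ((mem_sphere_iff_norm.1 hy).trans_lt hρr₂) hgy (ne_of_mem_sphere hy hρ.ne')
  obtain ⟨δ, hδ, htrap⟩ := exists_pos_forall_mem_ball_of_lt_on_sphere hρ (isCompact_sphere xs ρ)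
    (V := fun y => f y + C * ‖g y‖) (hf.continuous.add (continuous_const.mul hg.continuous.norm))
    fun y hy => by simpa [hfeas] using hsphere y hy
  refine ⟨δ, hδ, fun x hx hx0 => ?_⟩
  have hstay := htrap x (fun t ht => (hx t ht).continuousAt.continuousWithinAt)
    (by rwa [dist_eq_norm]) fun T hT hxT => sub_nonpos.1 <| by
      simpa using lyapunov_sub_le hgrad hJ hρreg hkey hx le_rfl hT hxT (c := 0)
        fun _ _ => sq_nonneg _
  refine ⟨fun t ht => (mem_ball_iff_norm.1 (hstay t ht)).trans hρε,
    tendsto_of_forall_mem_isCompact hgrad hJ hgradc hJc (isCompact_closedBall xs ρ) hρreg hkey ?_ hx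
      fun t ht => ball_subset_closedBall (hstay t ht)⟩
  intro y hy hgy hPy
  by_contra hne
  exact hiso y ((mem_closedBall_iff_norm.1 hy).trans_lt hρr₁) hne ⟨hgy, hPy⟩

/-- Theorem 2 (sufficiency): if `f, g` are twice continuously differentiable, `x*` is a
feasible equilibrium of `ψ` with full-row-rank Jacobian, `x*` is an isolated critical
point of the constrained problem, and `x*` is a strict local minimizer of `f` on the
feasible set, then `x*` is an asymptotically stable equilibrium of `x' = ψ(x)`: for every
`ε > 0` there is `δ > 0` such that every solution starting within `δ` of `x*` stays
within `ε` of `x*` for all `t ≥ 0` and converges to `x*` as `t → ∞`. -/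
theorem strict_local_min_asymptotically_stable (m n : ℕ) (hmn : m < n)
    (f : EuclideanSpace ℝ (Fin n) → ℝ)
    (g : EuclideanSpace ℝ (Fin n) → EuclideanSpace ℝ (Fin m))
    (gradf : EuclideanSpace ℝ (Fin n) → EuclideanSpace ℝ (Fin n))
    (J : EuclideanSpace ℝ (Fin n) → Matrix (Fin m) (Fin n) ℝ)
    (hf : ContDiff ℝ 2 f) (hg : ContDiff ℝ 2 g)
    (hgrad : ∀ y, HasGradientAt f (gradf y) y)
    (hJ : ∀ y, HasFDerivAt g
      (LinearMap.toContinuousLinearMap (Matrix.toEuclideanLin (J y))) y)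
    (xs : EuclideanSpace ℝ (Fin n))
    (hfeas : g xs = 0)
    (heq : psi g gradf J xs = 0)
    (hrank : IsUnit (J xs * (J xs)ᵀ))
    (hisolated : ∃ r > (0 : ℝ), ∀ y : EuclideanSpace ℝ (Fin n), ‖y - xs‖ < r → y ≠ xs →
      ¬(g y = 0 ∧ Matrix.toEuclideanLin (projMat (J y)) (gradf y) = 0))
    (hstrictmin : ∃ r > (0 : ℝ), ∀ y : EuclideanSpace ℝ (Fin n), ‖y - xs‖ < r →
      g y = 0 → y ≠ xs → f xs < f y) :
    ∀ ε > (0 : ℝ), ∃ δ > (0 : ℝ), ∀ x : ℝ → EuclideanSpace ℝ (Fin n),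
      (∀ t : ℝ, 0 ≤ t → HasDerivAt x (psi g gradf J (x t)) t) →
      ‖x 0 - xs‖ < δ →
      (∀ t : ℝ, 0 ≤ t → ‖x t - xs‖ < ε) ∧
      Filter.Tendsto x Filter.atTop (nhds xs) :=
  strict_local_min_asymptotically_stable_general m n f g gradf J hf hg hgrad hJ xs hfeas hrank
    hisolated hstrictmin
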